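/- arXiv:1901.10625 — 6 statements merged into one kernel-verified Lean document; each statement's English description precedes it below -/
import Mathlib

section
/- (Lemma 2.1(i)) Given two admissible 1D primitive states U⁻ and U⁺ with the HLLC wave speeds s⁻ = min(s_min(U⁻), s_min(U⁺)) and s⁺ = max(s_max(U⁻), s_max(U⁺)), the quantities A⁻ = s⁻E⁻ - m⁻ and A⁺ = s⁺E⁺ - m⁺ satisfy A⁻ < 0 and A⁺ > 0. -/
/-!
With `W = ρhγ²` we have `E = W - p`, `m = W u` and `W (1 - u²) = ρh`, so clearing the
denominator of `s_min` gives `s_min E - m = -(c_s (ρh - p) + u p) / (1 - c_s u)`, and similarly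
`s_max E - m = (c_s (ρh - p) - u p) / (1 + c_s u)`. For a perfect gas with `Γ ≤ 2` one has
`c_s < 1` and `p < c_s (ρh - p)`, so both numerators are positive since `|u| < 1`. Finally
`E > 0`, so `s ↦ s E - m` is increasing and widening `s_min` to `s⁻` (resp. `s_max` to `s⁺`)
preserves the signs.
-/

noncomputable section

namespace SRHD1D

/-- Lorentz factor `γ = (1 - u²)^(-1/2)`. -/
def lorentz (u : ℝ) : ℝ := 1 / Real.sqrt (1 - u ^ 2)

/-- Specific enthalpy `h = 1 + Γ p / ((Γ - 1) ρ)` of a perfect gas. -/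
def enthalpy (G r p : ℝ) : ℝ := 1 + G * p / ((G - 1) * r)

/-- Sound speed `c_s = √(Γ p / (ρ h))`. -/
def soundSpeed (G r p : ℝ) : ℝ := Real.sqrt (G * p / (r * enthalpy G r p))

/-- Conserved rest-mass density `D = ρ γ`. -/
def Dc (r u : ℝ) : ℝ := r * lorentz u

/-- Conserved momentum `m = ρ h γ² u`. -/
def mc (G r u p : ℝ) : ℝ := r * enthalpy G r p * lorentz u ^ 2 * u

/-- Conserved total energy `E = ρ h γ² - p`. -/
def Ec (G r u p : ℝ) : ℝ := r * enthalpy G r p * lorentz u ^ 2 - p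

/-- Minimum characteristic speed `s_min = (u - c_s)/(1 - c_s u)`. -/
def sMin (G r u p : ℝ) : ℝ := (u - soundSpeed G r p) / (1 - soundSpeed G r p * u)

/-- Maximum characteristic speed `s_max = (u + c_s)/(1 + c_s u)`. -/
def sMax (G r u p : ℝ) : ℝ := (u + soundSpeed G r p) / (1 + soundSpeed G r p * u)

variable {G r u p : ℝ}

lemma mul_enthalpy (hG1 : 1 < G) (hr : 0 < r) :
    r * enthalpy G r p = r + G * (p / (G - 1)) := by
  unfold enthalpy
  field_simp [(sub_pos.2 hG1).ne']

lemma mul_enthalpy_sub (hG1 : 1 < G) (hr : 0 < r) :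
    r * enthalpy G r p - p = r + p / (G - 1) := by
  rw [mul_enthalpy hG1 hr]
  field_simp [(sub_pos.2 hG1).ne']
  ring

lemma mul_enthalpy_pos (hG1 : 1 < G) (hr : 0 < r) (hp : 0 < p) : 0 < r * enthalpy G r p := by
  rw [mul_enthalpy hG1 hr]
  have := sub_pos.2 hG1
  positivity

lemma mul_enthalpy_sub_pos (hG1 : 1 < G) (hr : 0 < r) (hp : 0 < p) :
    0 < r * enthalpy G r p - p := by
  rw [mul_enthalpy_sub hG1 hr]
  have := sub_pos.2 hG1
  positivity

lemma soundSpeed_sq (hG1 : 1 < G) (hr : 0 < r) (hp : 0 < p) :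
    soundSpeed G r p ^ 2 = G * p / (r * enthalpy G r p) :=
  Real.sq_sqrt (div_nonneg (by positivity) (mul_enthalpy_pos hG1 hr hp).le)

lemma soundSpeed_pos (hG1 : 1 < G) (hr : 0 < r) (hp : 0 < p) : 0 < soundSpeed G r p :=
  Real.sqrt_pos.2 (div_pos (by positivity) (mul_enthalpy_pos hG1 hr hp))

lemma soundSpeed_lt_one (hG1 : 1 < G) (hG2 : G ≤ 2) (hr : 0 < r) (hp : 0 < p) :
    soundSpeed G r p < 1 := by
  rw [← sq_lt_one_iff₀ (soundSpeed_pos hG1 hr hp).le, soundSpeed_sq hG1 hr hp,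
    div_lt_one (mul_enthalpy_pos hG1 hr hp), mul_enthalpy hG1 hr]
  have : p ≤ p / (G - 1) := le_div_self hp.le (by linarith) (by linarith)
  nlinarith

/-- The polynomial inequality behind `p < c_s (ρh - p)`, in terms of the internal energy
`e = p / (Γ - 1)`: the difference is `Γr² + (Γ+1)re + Γ(2-Γ)e²`. -/
lemma pressure_mul_lt_of_le_two {e : ℝ} (hG1 : 1 < G) (hG2 : G ≤ 2) (hr : 0 < r) (he : 0 < e) :
    (G - 1) * e * (r + G * e) < G * (r + e) ^ 2 := by
  nlinarith [mul_pos hr he, mul_pos hr hr, mul_nonneg (sub_nonneg.2 hG2) (mul_pos he he).le]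

lemma pressure_lt_soundSpeed_mul (hG1 : 1 < G) (hG2 : G ≤ 2) (hr : 0 < r) (hp : 0 < p) :
    p < soundSpeed G r p * (r * enthalpy G r p - p) := by
  have hcw := mul_pos (soundSpeed_pos hG1 hr hp) (mul_enthalpy_sub_pos hG1 hr hp)
  rw [← pow_lt_pow_iff_left₀ hp.le hcw.le two_ne_zero, mul_pow, soundSpeed_sq hG1 hr hp,
    div_mul_eq_mul_div, lt_div_iff₀ (mul_enthalpy_pos hG1 hr hp), mul_enthalpy_sub hG1 hr,
    mul_enthalpy hG1 hr]
  set e := p / (G - 1) with he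
  have hpe : p = (G - 1) * e := by rw [he]; field_simp [(sub_pos.2 hG1).ne']
  have he0 : 0 < e := by rw [he]; exact div_pos hp (sub_pos.2 hG1)
  rw [hpe] at hp ⊢
  calc ((G - 1) * e) ^ 2 * (r + G * e) = (G - 1) * e * ((G - 1) * e * (r + G * e)) := by ring
    _ < (G - 1) * e * (G * (r + e) ^ 2) :=
      mul_lt_mul_of_pos_left (pressure_mul_lt_of_le_two hG1 hG2 hr he0) hp
    _ = G * ((G - 1) * e) * (r + e) ^ 2 := by ring

lemma abs_mul_pressure_lt_soundSpeed_mul (hG1 : 1 < G) (hG2 : G ≤ 2) (hr : 0 < r)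
    (hu : |u| < 1) (hp : 0 < p) : |u * p| < soundSpeed G r p * (r * enthalpy G r p - p) := by
  rw [abs_mul, abs_of_pos hp]
  exact (mul_lt_of_lt_one_left hp hu).trans (pressure_lt_soundSpeed_mul hG1 hG2 hr hp)

lemma abs_soundSpeed_mul_lt_one (hG1 : 1 < G) (hG2 : G ≤ 2) (hr : 0 < r) (hu : |u| < 1)
    (hp : 0 < p) : |soundSpeed G r p * u| < 1 := by
  rw [abs_mul, abs_of_pos (soundSpeed_pos hG1 hr hp)]
  exact mul_lt_one_of_nonneg_of_lt_one_left (soundSpeed_pos hG1 hr hp).le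
    (soundSpeed_lt_one hG1 hG2 hr hp) hu.le

lemma one_sub_sq_pos (hu : |u| < 1) : 0 < 1 - u ^ 2 := by
  rwa [sub_pos, sq_lt_one_iff_abs_lt_one]

lemma lorentz_sq (hu : |u| < 1) : lorentz u ^ 2 = 1 / (1 - u ^ 2) := by
  rw [lorentz, div_pow, one_pow, Real.sq_sqrt (one_sub_sq_pos hu).le]

lemma Ec_pos (hG1 : 1 < G) (hr : 0 < r) (hu : |u| < 1) (hp : 0 < p) : 0 < Ec G r u p := by
  have : r * enthalpy G r p ≤ r * enthalpy G r p / (1 - u ^ 2) :=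
    le_div_self (mul_enthalpy_pos hG1 hr hp).le (one_sub_sq_pos hu) (sub_le_self _ (sq_nonneg u))
  rw [Ec, lorentz_sq hu, mul_one_div]
  linarith [mul_enthalpy_sub_pos hG1 hr hp]

lemma sMin_mul_Ec_sub_mc (hu : |u| < 1) (hcu : 1 - soundSpeed G r p * u ≠ 0) :
    sMin G r u p * Ec G r u p - mc G r u p =
      -(soundSpeed G r p * (r * enthalpy G r p - p) + u * p) / (1 - soundSpeed G r p * u) := by
  have := (one_sub_sq_pos hu).ne'
  rw [mul_comm] at hcu
  rw [sMin, Ec, mc, lorentz_sq hu]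
  field_simp
  ring

lemma sMax_mul_Ec_sub_mc (hu : |u| < 1) (hcu : 1 + soundSpeed G r p * u ≠ 0) :
    sMax G r u p * Ec G r u p - mc G r u p =
      (soundSpeed G r p * (r * enthalpy G r p - p) - u * p) / (1 + soundSpeed G r p * u) := by
  have := (one_sub_sq_pos hu).ne'
  rw [mul_comm] at hcu
  rw [sMax, Ec, mc, lorentz_sq hu]
  field_simp
  ring

lemma sMin_mul_Ec_sub_mc_neg (hG1 : 1 < G) (hG2 : G ≤ 2) (hr : 0 < r) (hu : |u| < 1)
    (hp : 0 < p) : sMin G r u p * Ec G r u p - mc G r u p < 0 := by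
  have hcu := abs_lt.1 (abs_soundSpeed_mul_lt_one hG1 hG2 hr hu hp)
  rw [sMin_mul_Ec_sub_mc hu (by linarith), neg_div, neg_neg_iff_pos]
  refine div_pos ?_ (by linarith)
  linarith [abs_lt.1 (abs_mul_pressure_lt_soundSpeed_mul hG1 hG2 hr hu hp)]

lemma sMax_mul_Ec_sub_mc_pos (hG1 : 1 < G) (hG2 : G ≤ 2) (hr : 0 < r) (hu : |u| < 1)
    (hp : 0 < p) : 0 < sMax G r u p * Ec G r u p - mc G r u p := by
  have hcu := abs_lt.1 (abs_soundSpeed_mul_lt_one hG1 hG2 hr hu hp)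
  rw [sMax_mul_Ec_sub_mc hu (by linarith)]
  refine div_pos ?_ (by linarith)
  linarith [abs_lt.1 (abs_mul_pressure_lt_soundSpeed_mul hG1 hG2 hr hu hp)]

theorem hllc_A_sign_general (G r1 u1 p1 r2 u2 p2 sm sp A1 A2 : ℝ)
    (hG1 : 1 < G) (hG2 : G ≤ 2)
    (hr1 : 0 < r1) (hu1 : |u1| < 1) (hp1 : 0 < p1)
    (hr2 : 0 < r2) (hu2 : |u2| < 1) (hp2 : 0 < p2)
    (hsm : sm = min (sMin G r1 u1 p1) (sMin G r2 u2 p2))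
    (hsp : sp = max (sMax G r1 u1 p1) (sMax G r2 u2 p2))
    (hA1 : A1 = sm * Ec G r1 u1 p1 - mc G r1 u1 p1)
    (hA2 : A2 = sp * Ec G r2 u2 p2 - mc G r2 u2 p2)
    :
    A1 < 0 ∧ 0 < A2 := by
  subst hsm hsp hA1 hA2
  constructor
  · calc min (sMin G r1 u1 p1) (sMin G r2 u2 p2) * Ec G r1 u1 p1 - mc G r1 u1 p1
        ≤ sMin G r1 u1 p1 * Ec G r1 u1 p1 - mc G r1 u1 p1 := by
          gcongr
          · exact (Ec_pos hG1 hr1 hu1 hp1).le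
          · exact min_le_left _ _
      _ < 0 := sMin_mul_Ec_sub_mc_neg hG1 hG2 hr1 hu1 hp1
  · calc 0 < sMax G r2 u2 p2 * Ec G r2 u2 p2 - mc G r2 u2 p2 :=
          sMax_mul_Ec_sub_mc_pos hG1 hG2 hr2 hu2 hp2
      _ ≤ max (sMax G r1 u1 p1) (sMax G r2 u2 p2) * Ec G r2 u2 p2 - mc G r2 u2 p2 := by
          gcongr
          · exact (Ec_pos hG1 hr2 hu2 hp2).le
          · exact le_max_right _ _

theorem hllc_A_sign (G r1 u1 p1 r2 u2 p2 sm sp A1 A2 B1 B2 : ℝ)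
    (hG1 : 1 < G) (hG2 : G ≤ 2)
    (hr1 : 0 < r1) (hu1 : |u1| < 1) (hp1 : 0 < p1)
    (hr2 : 0 < r2) (hu2 : |u2| < 1) (hp2 : 0 < p2)
    (hsm : sm = min (sMin G r1 u1 p1) (sMin G r2 u2 p2))
    (hsp : sp = max (sMax G r1 u1 p1) (sMax G r2 u2 p2))
    (hA1 : A1 = sm * Ec G r1 u1 p1 - mc G r1 u1 p1)
    (hA2 : A2 = sp * Ec G r2 u2 p2 - mc G r2 u2 p2)
    (hB1 : B1 = mc G r1 u1 p1 * (sm - u1) - p1)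
    (hB2 : B2 = mc G r2 u2 p2 * (sp - u2) - p2)
    :
    A1 < 0 ∧ 0 < A2 :=
  hllc_A_sign_general G r1 u1 p1 r2 u2 p2 sm sp A1 A2 hG1 hG2 hr1 hu1 hp1 hr2 hu2 hp2 hsm hsp hA1
    hA2

end SRHD1D
end
end

section
/- (Lemma 2.1(ii)) Given two admissible 1D primitive states U⁻ and U⁺ with the HLLC wave speeds s⁻ = min(s_min(U⁻), s_min(U⁺)) and s⁺ = max(s_max(U⁻), s_max(U⁺)), the quantities A∓ and B∓ satisfy A⁻ - B⁻ < 0 and A⁺ + B⁺ > 0. -/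
noncomputable section

namespace SRHD1D

private lemma key1_abs (c w p G : ℝ) (hp : 0 < p) (hc0 : 0 < c) (hc1 : c < 1)
    (hcG : c ^ 2 < G - 1) (hcsq : c ^ 2 * w = G * p) : p * (1 + c) < w * c := by
  nlinarith [mul_pos hp (show 0 < G - c - c ^ 2 by nlinarith)]

private lemma hcoef_abs (W u p w : ℝ) (hp : 0 < p) (hul : -1 < u) (hur : u < 1)
    (hW : W * (1 - u ^ 2) = w) (hw2p : 2 * p < w) : 0 < W * (1 + u) - p := by
  nlinarith [mul_pos hp (show (0:ℝ) < 1 + u by linarith)]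

private lemma target_abs (W u c p s : ℝ) (hden : 0 < 1 + c * u)
    (hcoef : 0 < W * (1 + u) - p) (hs' : u + c ≤ s * (1 + c * u))
    (key1W : 0 < (1 + u) * (W * (1 - u ^ 2) * c - p * (1 + c))) :
    0 < W * (1 + u) * (s - u) - p * (1 + s) := by
  nlinarith [mul_nonneg hcoef.le (show (0:ℝ) ≤ s * (1 + c * u) - (u + c) by linarith),
    key1W, hden]

set_option maxHeartbeats 1000000 in
private lemma aux_plus (G r u p s : ℝ) (hG1 : 1 < G) (hG2 : G ≤ 2)
    (hr : 0 < r) (hu : |u| < 1) (hp : 0 < p)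
    (hs : sMax G r u p ≤ s) :
    0 < s * Ec G r u p - mc G r u p + mc G r u p * (s - u) - p := by
  obtain ⟨hul, hur⟩ := abs_lt.mp hu
  set c := soundSpeed G r p with hc
  set h := enthalpy G r p with hh
  have hG0 : 0 < G - 1 := by linarith
  have hh1 : (1:ℝ) < h := by
    rw [hh, enthalpy]
    have : 0 < G * p / ((G - 1) * r) := by positivity
    linarith
  have hrh0 : 0 < r * h := by positivity
  have hrh : r * h = r + G * p / (G - 1) := by
    rw [hh, enthalpy]; field_simp
  have hcsq : c ^ 2 * (r * h) = G * p := by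
    rw [hc, soundSpeed, ← hh, Real.sq_sqrt (by positivity)]
    field_simp
  have hc0 : 0 < c := by
    rw [hc, soundSpeed, ← hh]
    exact Real.sqrt_pos.mpr (by positivity)
  have h1 : (G - 1) * (r * h) = (G - 1) * r + G * p := by
    rw [hrh]; field_simp
  have hcG : c ^ 2 < G - 1 := by nlinarith
  have hc1 : c < 1 := by nlinarith
  have h1u : 0 < 1 - u ^ 2 := by nlinarith
  set γ := lorentz u with hγdef
  have hγ : γ ^ 2 * (1 - u ^ 2) = 1 := by
    rw [hγdef, lorentz, div_pow, one_pow, Real.sq_sqrt h1u.le]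
    field_simp
  have hden : 0 < 1 + c * u := by nlinarith
  have hs' : u + c ≤ s * (1 + c * u) := by
    have h2 := hs
    simp only [sMax, ← hc] at h2
    rw [div_le_iff₀ hden] at h2
    linarith
  set W := r * h * γ ^ 2 with hWdef
  have hW : W * (1 - u ^ 2) = r * h := by
    rw [hWdef]; nlinarith [hγ]
  clear_value W γ c h
  have key1 : p * (1 + c) < r * h * c :=
    key1_abs c (r * h) p G hp hc0 hc1 hcG hcsq
  have hw2p : 2 * p < r * h := by
    nlinarith [h1, mul_pos hr hG0, mul_nonneg hp.le (show (0:ℝ) ≤ 2 - G by linarith)]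
  have hcoef : 0 < W * (1 + u) - p := hcoef_abs W u p (r * h) hp hul hur hW hw2p
  have key1W : 0 < (1 + u) * (W * (1 - u ^ 2) * c - p * (1 + c)) := by
    rw [hW]
    exact mul_pos (by linarith) (by linarith)
  have target : 0 < W * (1 + u) * (s - u) - p * (1 + s) :=
    target_abs W u c p s hden hcoef hs' key1W
  have hmc : mc G r u p = W * u := by rw [mc, hWdef, ← hh, ← hγdef]
  have hEc : Ec G r u p = W - p := by rw [Ec, hWdef, ← hh, ← hγdef]
  rw [hmc, hEc]
  have e : s * (W - p) - W * u + W * u * (s - u) - p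
      = W * (1 + u) * (s - u) - p * (1 + s) := by ring
  linarith [target, e.ge, e.le]

private lemma lorentz_neg (u : ℝ) : lorentz (-u) = lorentz u := by
  simp [lorentz]

private lemma mc_neg (G r u p : ℝ) : mc G r (-u) p = -mc G r u p := by
  rw [mc, mc, lorentz_neg]; ring

private lemma Ec_neg (G r u p : ℝ) : Ec G r (-u) p = Ec G r u p := by
  rw [Ec, Ec, lorentz_neg]

private lemma sMax_neg (G r u p : ℝ) : sMax G r (-u) p = -sMin G r u p := by
  rw [sMax, sMin,
    show (-u + soundSpeed G r p) = -(u - soundSpeed G r p) by ring,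
    show (1 + soundSpeed G r p * -u) = 1 - soundSpeed G r p * u by ring,
    neg_div]

theorem hllc_A_sub_add_B_sign (G r1 u1 p1 r2 u2 p2 sm sp A1 A2 B1 B2 : ℝ)
    (hG1 : 1 < G) (hG2 : G ≤ 2)
    (hr1 : 0 < r1) (hu1 : |u1| < 1) (hp1 : 0 < p1)
    (hr2 : 0 < r2) (hu2 : |u2| < 1) (hp2 : 0 < p2)
    (hsm : sm = min (sMin G r1 u1 p1) (sMin G r2 u2 p2))
    (hsp : sp = max (sMax G r1 u1 p1) (sMax G r2 u2 p2))
    (hA1 : A1 = sm * Ec G r1 u1 p1 - mc G r1 u1 p1)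
    (hA2 : A2 = sp * Ec G r2 u2 p2 - mc G r2 u2 p2)
    (hB1 : B1 = mc G r1 u1 p1 * (sm - u1) - p1)
    (hB2 : B2 = mc G r2 u2 p2 * (sp - u2) - p2)
    :
    A1 - B1 < 0 ∧ 0 < A2 + B2 := by
  constructor
  · have hsle : sm ≤ sMin G r1 u1 p1 := hsm ▸ min_le_left _ _
    have hs : sMax G r1 (-u1) p1 ≤ -sm := by
      rw [sMax_neg]; linarith
    have h := aux_plus G r1 (-u1) p1 (-sm) hG1 hG2 hr1 (by rwa [abs_neg]) hp1 hs
    rw [mc_neg, Ec_neg] at h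
    nlinarith [h]
  · have hsle : sMax G r2 u2 p2 ≤ sp := hsp ▸ le_max_right _ _
    have h := aux_plus G r2 u2 p2 sp hG1 hG2 hr2 hu2 hp2 hsle
    nlinarith [h]

end SRHD1D
end
end

section
/- For any admissible 1D primitive state of a perfect gas with adiabatic index Γ ∈ (1,2], the conserved quantities satisfy E² - D² - m² - p² = (p²/(1-u²))·(2Γ/(c_s²(Γ-1)) - Γ²/(Γ-1)²) > 0; in particular E² > D² + m² + p². -/
noncomputable section

namespace SRHD1D

theorem energy_dominates (G r u p : ℝ)
    (hG1 : 1 < G) (hG2 : G ≤ 2) (hr : 0 < r) (hu : |u| < 1) (hp : 0 < p) :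
    Ec G r u p ^ 2 - Dc r u ^ 2 - mc G r u p ^ 2 - p ^ 2 =
      p ^ 2 / (1 - u ^ 2) *
        (2 * G / (soundSpeed G r p ^ 2 * (G - 1)) - G ^ 2 / (G - 1) ^ 2) ∧
    0 < Ec G r u p ^ 2 - Dc r u ^ 2 - mc G r u p ^ 2 - p ^ 2 ∧
    Dc r u ^ 2 + mc G r u p ^ 2 + p ^ 2 < Ec G r u p ^ 2 := by
  have hG : (0:ℝ) < G - 1 := by linarith
  have hu2 : u ^ 2 < 1 := by
    have h1 := abs_lt.mp hu
    nlinarith [h1.1, h1.2]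
  have h1u : (0:ℝ) < 1 - u ^ 2 := by linarith
  have hh : 0 < enthalpy G r p := by
    unfold enthalpy; positivity
  have hL2 : lorentz u ^ 2 = 1 / (1 - u ^ 2) := by
    rw [lorentz, div_pow, one_pow, Real.sq_sqrt h1u.le]
  have hcs2 : soundSpeed G r p ^ 2 = G * p / (r * enthalpy G r p) := by
    rw [soundSpeed, Real.sq_sqrt (by positivity)]
  have key : Ec G r u p ^ 2 - Dc r u ^ 2 - mc G r u p ^ 2 - p ^ 2 =
      p ^ 2 / (1 - u ^ 2) *
        (2 * G / (soundSpeed G r p ^ 2 * (G - 1)) - G ^ 2 / (G - 1) ^ 2) := by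
    simp only [Ec, Dc, mc, mul_pow, hcs2, hL2, enthalpy]
    have h0 : (G - 1) * r ≠ 0 := by positivity
    have h1 : (1 - u ^ 2) ≠ 0 := h1u.ne'
    have h2 : r * (1 + G * p / ((G - 1) * r)) ≠ 0 := by positivity
    have h3 : G * p ≠ 0 := by positivity
    field_simp
    ring
  have pos : 0 < p ^ 2 / (1 - u ^ 2) *
        (2 * G / (soundSpeed G r p ^ 2 * (G - 1)) - G ^ 2 / (G - 1) ^ 2) := by
    have hrw : 2 * G / (soundSpeed G r p ^ 2 * (G - 1)) - G ^ 2 / (G - 1) ^ 2 =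
        (2 * r * (G - 1) + G * (2 - G) * p) / (p * (G - 1) ^ 2) := by
      rw [hcs2, enthalpy]
      have h0 : (G - 1) * r ≠ 0 := by positivity
      field_simp
      ring
    rw [hrw]
    apply mul_pos (by positivity)
    apply div_pos _ (by positivity)
    nlinarith [mul_pos hr hG, mul_nonneg (mul_nonneg (by linarith : (0:ℝ) ≤ G) (by linarith : (0:ℝ) ≤ 2 - G)) hp.le]
  refine ⟨key, ?_, ?_⟩
  · rw [key]; exact pos
  · nlinarith [key, pos]


end SRHD1D
end
end

section
/- (Lemma 3.1(i)) Given two admissible 2D primitive states U⁻ and U⁺ (resolved along a common normal direction) with the HLLC wave speeds s⁻ = min(s_min(U⁻), s_min(U⁺)) and s⁺ = max(s_max(U⁻), s_max(U⁺)), the quantities A⁻ = s⁻E⁻ - m_n⁻ and A⁺ = s⁺E⁺ - m_n⁺ satisfy A⁻ < 0 and A⁺ > 0. -/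
noncomputable section

namespace SRHD2D

/-- Lorentz factor `γ = (1 - u_n² - u_τ²)^(-1/2)`. -/
def lorentz (un ut : ℝ) : ℝ := 1 / Real.sqrt (1 - un ^ 2 - ut ^ 2)

/-- Specific enthalpy `h = 1 + Γ p / ((Γ - 1) ρ)` of a perfect gas. -/
def enthalpy (G r p : ℝ) : ℝ := 1 + G * p / ((G - 1) * r)

/-- Sound speed `c_s = √(Γ p / (ρ h))`. -/
def soundSpeed (G r p : ℝ) : ℝ := Real.sqrt (G * p / (r * enthalpy G r p))

/-- Conserved rest-mass density `D = ρ γ`. -/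
def Dc (r un ut : ℝ) : ℝ := r * lorentz un ut

/-- Normal momentum `m_n = ρ h γ² u_n`. -/
def mn (G r un ut p : ℝ) : ℝ := r * enthalpy G r p * lorentz un ut ^ 2 * un

/-- Tangential momentum `m_τ = ρ h γ² u_τ`. -/
def mt (G r un ut p : ℝ) : ℝ := r * enthalpy G r p * lorentz un ut ^ 2 * ut

/-- Conserved total energy `E = ρ h γ² - p`. -/
def Ec (G r un ut p : ℝ) : ℝ := r * enthalpy G r p * lorentz un ut ^ 2 - p

/-- `σ_s = c_s² / (γ² (1 - c_s²))`. -/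
def sigmaS (G r un ut p : ℝ) : ℝ :=
  soundSpeed G r p ^ 2 / (lorentz un ut ^ 2 * (1 - soundSpeed G r p ^ 2))

/-- Minimum normal characteristic speed. -/
def sMin (G r un ut p : ℝ) : ℝ :=
  (un - Real.sqrt (sigmaS G r un ut p * (1 - un ^ 2 + sigmaS G r un ut p))) /
    (1 + sigmaS G r un ut p)

/-- Maximum normal characteristic speed. -/
def sMax (G r un ut p : ℝ) : ℝ :=
  (un + Real.sqrt (sigmaS G r un ut p * (1 - un ^ 2 + sigmaS G r un ut p))) /
    (1 + sigmaS G r un ut p)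

/-!
The extreme speeds `s_min, s_max` are the roots of `(1 + σ) x² - 2 u_n x + u_n² - σ`, which equals
`(x - u_n)² - σ (1 - x²)`. Hence `A⁻ < 0 < A⁺` follows once `E > 0` and the flux speed `m_n / E` of each
state lies strictly between its own characteristic speeds, i.e. `(m_n - u_n E)² < σ (E² - m_n²)`.
As `m_n - u_n E = u_n p`, this becomes a polynomial inequality in `W = ρh`, `γ²` and `p`. It follows from
`u_n² γ² ≤ γ² - 1` together with `Γ W² - (2Γ + 1) W p + Γ p² ≥ 0`, which is where `Γ ≤ 2` enters: with
`a = (Γ - 1) W - Γ p = (Γ - 1) ρ`, it is `(Γ a² + (Γ + 1) a p + Γ (2 - Γ) p²) / (Γ - 1)²`.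
-/

theorem characteristic_bounds {σ u m E : ℝ} (hσ : 0 ≤ σ) (hE : 0 < E)
    (h : (m - u * E) ^ 2 < σ * (E ^ 2 - m ^ 2)) :
    (u - √(σ * (1 - u ^ 2 + σ))) / (1 + σ) * E < m ∧
      m < (u + √(σ * (1 - u ^ 2 + σ))) / (1 + σ) * E := by
  set Q := σ * (1 - u ^ 2 + σ)
  have hσ1 : 0 < 1 + σ := by linarith
  have hsq : ((1 + σ) * m - u * E) ^ 2 < Q * E ^ 2 := by
    have : ((1 + σ) * m - u * E) ^ 2 =
        Q * E ^ 2 + (1 + σ) * ((m - u * E) ^ 2 - σ * (E ^ 2 - m ^ 2)) := by ring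
    nlinarith
  have hQ : 0 ≤ Q := by nlinarith [sq_nonneg ((1 + σ) * m - u * E)]
  obtain ⟨hlo, hhi⟩ := abs_lt_of_sq_lt_sq' (a := (1 + σ) * m - u * E) (b := √Q * E)
    (by rwa [mul_pow, Real.sq_sqrt hQ]) (by positivity)
  rw [div_mul_eq_mul_div, div_mul_eq_mul_div, div_lt_iff₀ hσ1, lt_div_iff₀ hσ1]
  constructor <;> linarith

theorem enthalpy_quadratic_nonneg {G W p : ℝ} (hG1 : 1 < G) (hG2 : G ≤ 2) (hp : 0 ≤ p)
    (hW : G * p ≤ (G - 1) * W) :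
    0 ≤ G * W ^ 2 - (2 * G + 1) * W * p + G * p ^ 2 := by
  set a := (G - 1) * W - G * p
  have hid : (G - 1) ^ 2 * (G * W ^ 2 - (2 * G + 1) * W * p + G * p ^ 2) =
      G * a ^ 2 + (G + 1) * a * p + G * (2 - G) * p ^ 2 := by ring
  have ha : 0 ≤ a := by linarith
  have h2G : 0 ≤ 2 - G := by linarith
  refine nonneg_of_mul_nonneg_right (a := (G - 1) ^ 2) ?_ (by nlinarith)
  rw [hid]
  positivity

/-- `(m_n - u_n E)² < σ (E² - m_n²)` for `m_n = W γ² u_n`, `E = W γ² - p`, `σ = Γ p / (γ² (W - Γ p))`,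
cleared of denominators and divided by `p`. -/
theorem flux_speed_inequality {G W p g u v : ℝ} (hG1 : 1 < G) (hG2 : G ≤ 2) (hp : 0 < p)
    (hW : G * p < (G - 1) * W) (hu : u ^ 2 + v ^ 2 < 1) (hg : g * (1 - u ^ 2 - v ^ 2) = 1) :
    u ^ 2 * p * g * (W - G * p) < G * ((W * g - p) ^ 2 - (W * g * u) ^ 2) := by
  have hg0 : 0 < g := pos_of_mul_pos_left (by rw [hg]; exact one_pos) (by linarith)
  have hgu : g * u ^ 2 ≤ g - 1 := by nlinarith [mul_nonneg hg0.le (sq_nonneg v)]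
  have hW0 : 0 < W := by nlinarith
  have hWp : 0 ≤ W - G * p := by nlinarith
  have hquad := enthalpy_quadratic_nonneg hG1 hG2 hp.le hW.le
  calc u ^ 2 * p * g * (W - G * p) = p * (W - G * p) * (g * u ^ 2) := by ring
    _ ≤ p * (W - G * p) * (g - 1) := by gcongr
    _ < G * ((W * g - p) ^ 2 - W ^ 2 * g * (g - 1)) := by nlinarith [mul_nonneg hg0.le hquad]
    _ ≤ G * ((W * g - p) ^ 2 - (W * g * u) ^ 2) := by
      have : W ^ 2 * g * (g * u ^ 2) ≤ W ^ 2 * g * (g - 1) := by gcongr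
      nlinarith

section State

variable {G r un ut p : ℝ}

theorem lorentz_sq_mul (hu : un ^ 2 + ut ^ 2 < 1) :
    lorentz un ut ^ 2 * (1 - un ^ 2 - ut ^ 2) = 1 := by
  rw [lorentz, div_pow, one_pow, Real.sq_sqrt (by linarith), one_div_mul_cancel (by linarith)]

theorem sub_one_mul_mul_enthalpy (hG1 : 1 < G) (hr : 0 < r) :
    (G - 1) * (r * enthalpy G r p) = (G - 1) * r + G * p := by
  have : G - 1 ≠ 0 := by linarith
  rw [enthalpy]
  field_simp

theorem sigmaS_eq (hG1 : 1 < G) (hr : 0 < r) (hp : 0 < p) :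
    sigmaS G r un ut p = G * p / (lorentz un ut ^ 2 * (r * enthalpy G r p - G * p)) := by
  have hW := sub_one_mul_mul_enthalpy (p := p) hG1 hr
  have hW0 : 0 < r * enthalpy G r p := by nlinarith
  rw [sigmaS, soundSpeed, Real.sq_sqrt (by positivity), one_sub_div hW0.ne', mul_div_assoc',
    div_div_div_cancel_right₀ hW0.ne']

theorem Ec_pos_and_sMin_mul_Ec_lt_mn_lt_sMax_mul_Ec (hG1 : 1 < G) (hG2 : G ≤ 2) (hr : 0 < r)
    (hu : un ^ 2 + ut ^ 2 < 1) (hp : 0 < p) :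
    0 < Ec G r un ut p ∧ sMin G r un ut p * Ec G r un ut p < mn G r un ut p ∧
      mn G r un ut p < sMax G r un ut p * Ec G r un ut p := by
  have hg := lorentz_sq_mul hu
  have hσ := sigmaS_eq (un := un) (ut := ut) hG1 hr hp
  have hW := sub_one_mul_mul_enthalpy (p := p) hG1 hr
  set g := lorentz un ut ^ 2
  set W := r * enthalpy G r p
  have hg1 : 1 ≤ g := by nlinarith [sq_nonneg un, sq_nonneg ut]
  have hWGp : G * p < (G - 1) * W := by nlinarith
  have hW0 : 0 < W := by nlinarith
  have hWp : G * p < W := by nlinarith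
  have hE : Ec G r un ut p = W * g - p := rfl
  have hm : mn G r un ut p = W * g * un := rfl
  have hEpos : 0 < Ec G r un ut p := by rw [hE]; nlinarith [mul_le_mul_of_nonneg_left hg1 hW0.le]
  have hflux : (mn G r un ut p - un * Ec G r un ut p) ^ 2 <
      sigmaS G r un ut p * (Ec G r un ut p ^ 2 - mn G r un ut p ^ 2) := by
    have hcore := mul_lt_mul_of_pos_left (flux_speed_inequality hG1 hG2 hp hWGp hu hg) hp
    rw [hσ, hE, hm, div_mul_eq_mul_div, lt_div_iff₀ (by nlinarith)]
    linear_combination hcore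
  have hσpos : 0 ≤ sigmaS G r un ut p := by
    rw [hσ]
    have : 0 < W - G * p := by linarith
    positivity
  exact ⟨hEpos, characteristic_bounds hσpos hEpos hflux⟩

end State

theorem hllc2d_A_sign_general (G r1 un1 ut1 p1 r2 un2 ut2 p2 sm sp A1 A2 : ℝ)
    (hG1 : 1 < G) (hG2 : G ≤ 2)
    (hr1 : 0 < r1) (hu1 : un1 ^ 2 + ut1 ^ 2 < 1) (hp1 : 0 < p1)
    (hr2 : 0 < r2) (hu2 : un2 ^ 2 + ut2 ^ 2 < 1) (hp2 : 0 < p2)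
    (hsm : sm = min (sMin G r1 un1 ut1 p1) (sMin G r2 un2 ut2 p2))
    (hsp : sp = max (sMax G r1 un1 ut1 p1) (sMax G r2 un2 ut2 p2))
    (hA1 : A1 = sm * Ec G r1 un1 ut1 p1 - mn G r1 un1 ut1 p1)
    (hA2 : A2 = sp * Ec G r2 un2 ut2 p2 - mn G r2 un2 ut2 p2)
    :
    A1 < 0 ∧ 0 < A2 := by
  obtain ⟨hE1, hlo, -⟩ := Ec_pos_and_sMin_mul_Ec_lt_mn_lt_sMax_mul_Ec hG1 hG2 hr1 hu1 hp1
  obtain ⟨hE2, -, hhi⟩ := Ec_pos_and_sMin_mul_Ec_lt_mn_lt_sMax_mul_Ec hG1 hG2 hr2 hu2 hp2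
  have hsm_le : sm * Ec G r1 un1 ut1 p1 ≤ sMin G r1 un1 ut1 p1 * Ec G r1 un1 ut1 p1 :=
    mul_le_mul_of_nonneg_right (hsm ▸ min_le_left _ _) hE1.le
  have hsp_ge : sMax G r2 un2 ut2 p2 * Ec G r2 un2 ut2 p2 ≤ sp * Ec G r2 un2 ut2 p2 :=
    mul_le_mul_of_nonneg_right (hsp ▸ le_max_right _ _) hE2.le
  constructor <;> linarith

theorem hllc2d_A_sign (G r1 un1 ut1 p1 r2 un2 ut2 p2 sm sp A1 A2 B1 B2 : ℝ)
    (hG1 : 1 < G) (hG2 : G ≤ 2)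
    (hr1 : 0 < r1) (hu1 : un1 ^ 2 + ut1 ^ 2 < 1) (hp1 : 0 < p1)
    (hr2 : 0 < r2) (hu2 : un2 ^ 2 + ut2 ^ 2 < 1) (hp2 : 0 < p2)
    (hsm : sm = min (sMin G r1 un1 ut1 p1) (sMin G r2 un2 ut2 p2))
    (hsp : sp = max (sMax G r1 un1 ut1 p1) (sMax G r2 un2 ut2 p2))
    (hA1 : A1 = sm * Ec G r1 un1 ut1 p1 - mn G r1 un1 ut1 p1)
    (hA2 : A2 = sp * Ec G r2 un2 ut2 p2 - mn G r2 un2 ut2 p2)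
    (hB1 : B1 = mn G r1 un1 ut1 p1 * (sm - un1) - p1)
    (hB2 : B2 = mn G r2 un2 ut2 p2 * (sp - un2) - p2)
    :
    A1 < 0 ∧ 0 < A2 :=
  hllc2d_A_sign_general G r1 un1 ut1 p1 r2 un2 ut2 p2 sm sp A1 A2 hG1 hG2 hr1 hu1 hp1 hr2 hu2 hp2
    hsm hsp hA1 hA2

end SRHD2D
end
end

section
/- (Lemma 3.1(ii)) Given two admissible 2D primitive states U⁻ and U⁺ (resolved along a common normal direction) with the HLLC wave speeds s⁻ = min(s_min(U⁻), s_min(U⁺)) and s⁺ = max(s_max(U⁻), s_max(U⁺)), the quantities A∓ and B∓ satisfy A⁻ - B⁻ < 0 and A⁺ + B⁺ > 0. -/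
noncomputable section

namespace SRHD2D

lemma lorentz_neg (un ut : ℝ) : lorentz (-un) ut = lorentz un ut := by
  unfold lorentz
  rw [show (1 - (-un) ^ 2 - ut ^ 2) = (1 - un ^ 2 - ut ^ 2) from by ring]

lemma sigmaS_neg (G r un ut p : ℝ) : sigmaS G r (-un) ut p = sigmaS G r un ut p := by
  unfold sigmaS; rw [lorentz_neg]

lemma sMin_neg (G r un ut p : ℝ) : sMin G r (-un) ut p = - sMax G r un ut p := by
  unfold sMin sMax
  rw [sigmaS_neg, show (1 - (-un) ^ 2 + sigmaS G r un ut p) = (1 - un ^ 2 + sigmaS G r un ut p) from by ring]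
  ring

lemma mn_neg (G r un ut p : ℝ) : mn G r (-un) ut p = - mn G r un ut p := by
  unfold mn; rw [lorentz_neg]; ring

lemma Ec_neg (G r un ut p : ℝ) : Ec G r (-un) ut p = Ec G r un ut p := by
  unfold Ec; rw [lorentz_neg]


lemma core (W p un σ Q s : ℝ) (hb : 0 < 1 - un ^ 2) (ha : 0 < 1 - un) (hp : 0 < p)
    (hσpos : 0 < σ) (hQpos : 0 < Q) (hQ2 : Q ^ 2 = σ * (1 - un ^ 2 + σ))
    (hWσb : p * ((1 - un ^ 2) + 2 * σ) < W * σ * (1 - un ^ 2))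
    (hs : s ≤ (un - Q) / (1 + σ)) :
    s * (W - p) - W * un - (W * un * (s - un) - p) < 0 := by
  have hσ1 : (0:ℝ) < 1 + σ := by linarith
  have hQT : Q < 1 - un ^ 2 + σ := by
    nlinarith [hQ2, hQpos, mul_pos (show (0:ℝ) < 1 - un ^ 2 + σ by linarith) hb]
  have hQQ : Q ^ 2 - (un * σ) ^ 2 = σ * (1 - un ^ 2) * (1 + σ) := by
    linear_combination hQ2
  have hQun : 0 < Q + un * σ := by
    nlinarith [hQQ, hQpos, mul_pos (mul_pos hσpos hb) hσ1]
  have hWa : p * (1 - un) * ((1 - un ^ 2 + σ) - σ * un) < (W * (1 - un) - p) * (σ * (1 - un ^ 2)) := by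
    linarith [mul_pos ha (sub_pos.mpr hWσb)]
  have hTun : 0 < (1 - un ^ 2 + σ) - σ * un := by nlinarith [mul_pos hσpos ha]
  have hWap : 0 < W * (1 - un) - p := by
    have h0 : 0 < (W * (1 - un) - p) * (σ * (1 - un ^ 2)) :=
      lt_trans (by positivity) hWa
    rcases mul_pos_iff.mp h0 with ⟨h, _⟩ | ⟨_, h⟩
    · linarith
    · linarith [mul_pos hσpos hb]
  have h1 : (Q + un * σ) * (p * (1 - un) * ((1 - un ^ 2 + σ) - σ * un))
      < (Q + un * σ) * ((W * (1 - un) - p) * (σ * (1 - un ^ 2))) :=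
    mul_lt_mul_of_pos_left hWa hQun
  have h2 : (Q + un * σ) * (p * (1 - un) * (Q - σ * un))
      ≤ (Q + un * σ) * (p * (1 - un) * ((1 - un ^ 2 + σ) - σ * un)) := by
    apply mul_le_mul_of_nonneg_left _ hQun.le
    apply mul_le_mul_of_nonneg_left _ (mul_pos hp ha).le
    linarith
  have h3 : (Q + un * σ) * (p * (1 - un) * (Q - σ * un))
      = p * (1 - un) * (σ * (1 - un ^ 2) * (1 + σ)) := by
    linear_combination (p * (1 - un)) * hQQ
  have h4 : p * (1 - un) * (σ * (1 - un ^ 2) * (1 + σ))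
      < (Q + un * σ) * ((W * (1 - un) - p) * (σ * (1 - un ^ 2))) := by
    linarith
  have hfinal : p * (1 - un) * (1 + σ) < (Q + un * σ) * (W * (1 - un) - p) := by
    have h4' : (p * (1 - un) * (1 + σ)) * (σ * (1 - un ^ 2))
        < ((Q + un * σ) * (W * (1 - un) - p)) * (σ * (1 - un ^ 2)) := by linarith
    exact lt_of_mul_lt_mul_right h4' (mul_pos hσpos hb).le
  have hfs1 : W * (1 - un) * ((un - Q) / (1 + σ) - un) + p * (1 - (un - Q) / (1 + σ)) < 0 := by
    have e : W * (1 - un) * ((un - Q) / (1 + σ) - un) + p * (1 - (un - Q) / (1 + σ))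
        = (p * (1 + σ - un + Q) - W * (1 - un) * (Q + un * σ)) / (1 + σ) := by
      field_simp; ring
    rw [e]
    apply div_neg_of_neg_of_pos _ hσ1
    linarith [hfinal]
  have hmono : W * (1 - un) * (s - un) + p * (1 - s)
      ≤ W * (1 - un) * ((un - Q) / (1 + σ) - un) + p * (1 - (un - Q) / (1 + σ)) := by
    linarith [mul_nonneg hWap.le (sub_nonneg.mpr hs)]
  linarith [lt_of_le_of_lt hmono hfs1]

lemma key (G r un ut p s : ℝ) (hG1 : 1 < G) (hG2 : G ≤ 2) (hr : 0 < r)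
    (hu : un ^ 2 + ut ^ 2 < 1) (hp : 0 < p) (hs : s ≤ sMin G r un ut p) :
    s * Ec G r un ut p - mn G r un ut p - (mn G r un ut p * (s - un) - p) < 0 := by
  have hd : 0 < 1 - un ^ 2 - ut ^ 2 := by nlinarith
  have hb : 0 < 1 - un ^ 2 := by nlinarith [sq_nonneg ut]
  have hun1 : un < 1 := by nlinarith [sq_nonneg (un - 1)]
  have ha : 0 < 1 - un := by linarith
  set g2 : ℝ := 1 / (1 - un ^ 2 - ut ^ 2) with hg2def
  have hg2pos : 0 < g2 := by positivity
  have hγ2 : lorentz un ut ^ 2 = g2 := by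
    rw [lorentz, div_pow, one_pow, Real.sq_sqrt hd.le, hg2def]
  have hg2d : g2 * (1 - un ^ 2 - ut ^ 2) = 1 := by
    rw [hg2def]; field_simp
  clear_value g2
  have hGm : 0 < G - 1 := by linarith
  have hh1 : 1 < enthalpy G r p := by
    rw [enthalpy]
    have : 0 < G * p / ((G - 1) * r) := by positivity
    linarith
  have hhpos : 0 < enthalpy G r p := by linarith
  have hrhpos : 0 < r * enthalpy G r p := mul_pos hr hhpos
  have hrh : (G - 1) * (r * enthalpy G r p) = (G - 1) * r + G * p := by
    rw [enthalpy]; field_simp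
  have hrh2p : 2 * p < r * enthalpy G r p := by nlinarith
  have hrhGp : G * p < r * enthalpy G r p := by nlinarith
  have hc2 : soundSpeed G r p ^ 2 = G * p / (r * enthalpy G r p) := by
    rw [soundSpeed, Real.sq_sqrt (by positivity)]
  set c2 : ℝ := G * p / (r * enthalpy G r p) with hc2def
  have hc2pos : 0 < c2 := by rw [hc2def]; positivity
  have hc2lt1 : c2 < 1 := (div_lt_one hrhpos).mpr hrhGp
  have h1c2 : 0 < 1 - c2 := by linarith
  have hc2G : r * enthalpy G r p * c2 = G * p := by
    rw [hc2def]; field_simp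
  have hc2ltG : c2 < G - 1 := by
    rw [hc2def, div_lt_iff₀ hrhpos]; nlinarith
  clear_value c2
  set σ : ℝ := sigmaS G r un ut p with hσdef
  have hσ : σ = c2 / (g2 * (1 - c2)) := by
    rw [hσdef, sigmaS, hc2, hγ2]
  clear_value σ
  have hσpos : 0 < σ := by
    rw [hσ]; exact div_pos hc2pos (mul_pos hg2pos h1c2)
  have hσe : σ * (1 - c2) = c2 * (1 - un ^ 2 - ut ^ 2) := by
    rw [hσ, hg2def]; field_simp
  set W : ℝ := r * enthalpy G r p * g2 with hWdef
  have hWσ : W * σ * (1 - c2) = G * p := by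
    rw [hWdef]
    linear_combination (r * enthalpy G r p * g2) * hσe + (r * enthalpy G r p * c2) * hg2d + hc2G
  clear_value W
  -- main bound  W σ b > p (b + 2σ)
  have hmain : (W * σ * (1 - un ^ 2) - p * ((1 - un ^ 2) + 2 * σ)) * (1 - c2)
      = p * (1 - un ^ 2) * (G - 1 - c2) + 2 * p * c2 * ((1 - un ^ 2) - (1 - un ^ 2 - ut ^ 2)) := by
    linear_combination (1 - un ^ 2) * hWσ - 2 * p * hσe
  have hx : 0 ≤ 2 * p * c2 * ((1 - un ^ 2) - (1 - un ^ 2 - ut ^ 2)) := by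
    have : (0:ℝ) ≤ (1 - un ^ 2) - (1 - un ^ 2 - ut ^ 2) := by nlinarith [sq_nonneg ut]
    positivity
  have hy : 0 < p * (1 - un ^ 2) * (G - 1 - c2) := by
    have : 0 < G - 1 - c2 := by linarith
    positivity
  have hWσb : p * ((1 - un ^ 2) + 2 * σ) < W * σ * (1 - un ^ 2) := by
    have hpos : 0 < (W * σ * (1 - un ^ 2) - p * ((1 - un ^ 2) + 2 * σ)) * (1 - c2) := by
      rw [hmain]; linarith
    rcases mul_pos_iff.mp hpos with ⟨h, _⟩ | ⟨_, h⟩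
    · linarith
    · linarith
  have hQarg : 0 < σ * (1 - un ^ 2 + σ) := mul_pos hσpos (by linarith)
  have hsMin : sMin G r un ut p = (un - Real.sqrt (σ * (1 - un ^ 2 + σ))) / (1 + σ) := by
    rw [sMin, ← hσdef]
  have hss : s ≤ (un - Real.sqrt (σ * (1 - un ^ 2 + σ))) / (1 + σ) := hsMin ▸ hs
  have hE : Ec G r un ut p = W - p := by rw [Ec, hγ2, ← hWdef]
  have hm : mn G r un ut p = W * un := by rw [mn, hγ2, ← hWdef]
  rw [hE, hm]
  exact core W p un σ _ s hb ha hp hσpos (Real.sqrt_pos.mpr hQarg)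
    (Real.sq_sqrt hQarg.le) hWσb hss

theorem hllc2d_A_sub_add_B_sign (G r1 un1 ut1 p1 r2 un2 ut2 p2 sm sp A1 A2 B1 B2 : ℝ)
    (hG1 : 1 < G) (hG2 : G ≤ 2)
    (hr1 : 0 < r1) (hu1 : un1 ^ 2 + ut1 ^ 2 < 1) (hp1 : 0 < p1)
    (hr2 : 0 < r2) (hu2 : un2 ^ 2 + ut2 ^ 2 < 1) (hp2 : 0 < p2)
    (hsm : sm = min (sMin G r1 un1 ut1 p1) (sMin G r2 un2 ut2 p2))
    (hsp : sp = max (sMax G r1 un1 ut1 p1) (sMax G r2 un2 ut2 p2))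
    (hA1 : A1 = sm * Ec G r1 un1 ut1 p1 - mn G r1 un1 ut1 p1)
    (hA2 : A2 = sp * Ec G r2 un2 ut2 p2 - mn G r2 un2 ut2 p2)
    (hB1 : B1 = mn G r1 un1 ut1 p1 * (sm - un1) - p1)
    (hB2 : B2 = mn G r2 un2 ut2 p2 * (sp - un2) - p2)
    :
    A1 - B1 < 0 ∧ 0 < A2 + B2 := by
  constructor
  · have h := key G r1 un1 ut1 p1 sm hG1 hG2 hr1 hu1 hp1
      (by rw [hsm]; exact min_le_left _ _)
    rw [hA1, hB1]; linarith
  · have hu2' : (-un2) ^ 2 + ut2 ^ 2 < 1 := by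
      rw [show ((-un2) ^ 2 : ℝ) = un2 ^ 2 from by ring]; exact hu2
    have hs2 : -sp ≤ sMin G r2 (-un2) ut2 p2 := by
      rw [sMin_neg]
      have : sMax G r2 un2 ut2 p2 ≤ sp := by rw [hsp]; exact le_max_right _ _
      linarith
    have h := key G r2 (-un2) ut2 p2 (-sp) hG1 hG2 hr2 hu2' hp2 hs2
    rw [Ec_neg, mn_neg] at h
    rw [hA2, hB2]; nlinarith [h]


end SRHD2D
end
end

section
/- (Lemma 3.1(iii)) Given two admissible 2D primitive states U⁻ and U⁺ (resolved along a common normal direction) with the HLLC wave speeds s⁻ = min(s_min(U⁻), s_min(U⁺)) and s⁺ = max(s_max(U⁻), s_max(U⁺)), the quantities A∓ and B∓ satisfy s⁻A⁻ - B⁻ > 0 and s⁺A⁺ - B⁺ > 0. -/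
noncomputable section

namespace SRHD2D

lemma enthalpy_pos (G r p : ℝ) (hG1 : 1 < G) (hr : 0 < r) (hp : 0 < p) :
    0 < enthalpy G r p := by
  unfold enthalpy
  have : 0 < G * p / ((G - 1) * r) :=
    div_pos (by positivity) (mul_pos (by linarith) hr)
  linarith

lemma cs_sq_lt_one (G r p : ℝ) (hG1 : 1 < G) (hG2 : G ≤ 2) (hr : 0 < r) (hp : 0 < p) :
    soundSpeed G r p ^ 2 < 1 := by
  have hh := enthalpy_pos G r p hG1 hr hp
  have hx : 0 ≤ G * p / (r * enthalpy G r p) :=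
    div_nonneg (by positivity) (le_of_lt (mul_pos hr hh))
  rw [soundSpeed, Real.sq_sqrt hx]
  rw [div_lt_one (mul_pos hr hh)]
  have hG0 : G - 1 ≠ 0 := by linarith
  have hr0 : r ≠ 0 := ne_of_gt hr
  have h1 : r * enthalpy G r p = r + G * p / (G - 1) := by
    unfold enthalpy; field_simp
  rw [h1]
  have h2 : G * p ≤ G * p / (G - 1) := by
    rw [le_div_iff₀ (by linarith)]
    nlinarith [mul_nonneg (le_of_lt (mul_pos (by linarith : (0:ℝ) < G) hp))
      (by linarith : (0:ℝ) ≤ 2 - G)]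
  linarith

lemma sigma_nonneg (G r un ut p : ℝ) (hG1 : 1 < G) (hG2 : G ≤ 2) (hr : 0 < r) (hp : 0 < p) :
    0 ≤ sigmaS G r un ut p := by
  have h1 := cs_sq_lt_one G r p hG1 hG2 hr hp
  unfold sigmaS
  apply div_nonneg (sq_nonneg _)
  have : (0:ℝ) ≤ lorentz un ut ^ 2 := sq_nonneg _
  nlinarith

lemma sMax_lt_one (G r un ut p : ℝ) (hG1 : 1 < G) (hG2 : G ≤ 2) (hr : 0 < r) (hp : 0 < p)
    (hun : un ^ 2 < 1) : sMax G r un ut p < 1 := by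
  have hσ := sigma_nonneg G r un ut p hG1 hG2 hr hp
  have hun1 : un < 1 := by nlinarith
  set σ := sigmaS G r un ut p with hσdef
  rw [sMax, div_lt_one (by linarith)]
  have h : Real.sqrt (σ * (1 - un ^ 2 + σ)) < 1 + σ - un := by
    rw [Real.sqrt_lt' (by linarith)]
    nlinarith [sq_nonneg (1 - un)]
  linarith

lemma sMax_gt_negone (G r un ut p : ℝ) (hG1 : 1 < G) (hG2 : G ≤ 2) (hr : 0 < r) (hp : 0 < p)
    (hun : un ^ 2 < 1) : -1 < sMax G r un ut p := by
  have hσ := sigma_nonneg G r un ut p hG1 hG2 hr hp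
  have hun1 : -1 < un := by nlinarith
  set σ := sigmaS G r un ut p
  rw [sMax, lt_div_iff₀ (by linarith)]
  have := Real.sqrt_nonneg (σ * (1 - un ^ 2 + σ))
  nlinarith

lemma sMin_gt_negone (G r un ut p : ℝ) (hG1 : 1 < G) (hG2 : G ≤ 2) (hr : 0 < r) (hp : 0 < p)
    (hun : un ^ 2 < 1) : -1 < sMin G r un ut p := by
  have hσ := sigma_nonneg G r un ut p hG1 hG2 hr hp
  have hun1 : -1 < un := by nlinarith
  set σ := sigmaS G r un ut p with hσdef
  rw [sMin, lt_div_iff₀ (by linarith)]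
  have h : Real.sqrt (σ * (1 - un ^ 2 + σ)) < un + 1 + σ := by
    rw [Real.sqrt_lt' (by linarith)]
    nlinarith [sq_nonneg (1 + un)]
  linarith

lemma sMin_lt_one (G r un ut p : ℝ) (hG1 : 1 < G) (hG2 : G ≤ 2) (hr : 0 < r) (hp : 0 < p)
    (hun : un ^ 2 < 1) : sMin G r un ut p < 1 := by
  have hσ := sigma_nonneg G r un ut p hG1 hG2 hr hp
  have hun1 : un < 1 := by nlinarith
  set σ := sigmaS G r un ut p
  rw [sMin, div_lt_one (by linarith)]
  have := Real.sqrt_nonneg (σ * (1 - un ^ 2 + σ))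
  nlinarith

lemma key_pos (G r un ut p s : ℝ) (hG1 : 1 < G) (hr : 0 < r) (hp : 0 < p)
    (hs1 : -1 < s) (hs2 : s < 1) :
    0 < s * (s * Ec G r un ut p - mn G r un ut p) - (mn G r un ut p * (s - un) - p) := by
  have hh := enthalpy_pos G r p hG1 hr hp
  have hW : 0 ≤ r * enthalpy G r p * lorentz un ut ^ 2 := by positivity
  have hkey : s * (s * Ec G r un ut p - mn G r un ut p) - (mn G r un ut p * (s - un) - p)
      = (r * enthalpy G r p * lorentz un ut ^ 2) * (s - un) ^ 2 + p * (1 - s ^ 2) := by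
    simp only [Ec, mn]; ring
  rw [hkey]
  have hs : s ^ 2 < 1 := by
    nlinarith [mul_pos (by linarith : (0:ℝ) < 1 - s) (by linarith : (0:ℝ) < 1 + s)]
  have h1 : 0 < p * (1 - s ^ 2) := mul_pos hp (by linarith)
  nlinarith [mul_nonneg hW (sq_nonneg (s - un))]

theorem hllc2d_sA_sub_B_pos (G r1 un1 ut1 p1 r2 un2 ut2 p2 sm sp A1 A2 B1 B2 : ℝ)
    (hG1 : 1 < G) (hG2 : G ≤ 2)
    (hr1 : 0 < r1) (hu1 : un1 ^ 2 + ut1 ^ 2 < 1) (hp1 : 0 < p1)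
    (hr2 : 0 < r2) (hu2 : un2 ^ 2 + ut2 ^ 2 < 1) (hp2 : 0 < p2)
    (hsm : sm = min (sMin G r1 un1 ut1 p1) (sMin G r2 un2 ut2 p2))
    (hsp : sp = max (sMax G r1 un1 ut1 p1) (sMax G r2 un2 ut2 p2))
    (hA1 : A1 = sm * Ec G r1 un1 ut1 p1 - mn G r1 un1 ut1 p1)
    (hA2 : A2 = sp * Ec G r2 un2 ut2 p2 - mn G r2 un2 ut2 p2)
    (hB1 : B1 = mn G r1 un1 ut1 p1 * (sm - un1) - p1)
    (hB2 : B2 = mn G r2 un2 ut2 p2 * (sp - un2) - p2)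
    :
    0 < sm * A1 - B1 ∧ 0 < sp * A2 - B2 := by
  have hun1 : un1 ^ 2 < 1 := by nlinarith [sq_nonneg ut1]
  have hun2 : un2 ^ 2 < 1 := by nlinarith [sq_nonneg ut2]
  have hsm1 : -1 < sm := by
    rw [hsm, lt_min_iff]
    exact ⟨sMin_gt_negone G r1 un1 ut1 p1 hG1 hG2 hr1 hp1 hun1,
      sMin_gt_negone G r2 un2 ut2 p2 hG1 hG2 hr2 hp2 hun2⟩
  have hsm2 : sm < 1 := by
    rw [hsm]
    exact lt_of_le_of_lt (min_le_left _ _) (sMin_lt_one G r1 un1 ut1 p1 hG1 hG2 hr1 hp1 hun1)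
  have hsp1 : -1 < sp := by
    rw [hsp]
    exact lt_of_lt_of_le (sMax_gt_negone G r1 un1 ut1 p1 hG1 hG2 hr1 hp1 hun1) (le_max_left _ _)
  have hsp2 : sp < 1 := by
    rw [hsp, max_lt_iff]
    exact ⟨sMax_lt_one G r1 un1 ut1 p1 hG1 hG2 hr1 hp1 hun1,
      sMax_lt_one G r2 un2 ut2 p2 hG1 hG2 hr2 hp2 hun2⟩
  subst hA1 hA2 hB1 hB2
  exact ⟨key_pos G r1 un1 ut1 p1 sm hG1 hr1 hp1 hsm1 hsm2,
    key_pos G r2 un2 ut2 p2 sp hG1 hr2 hp2 hsp1 hsp2⟩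


end SRHD2D
end
end
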